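/- arXiv:2010.06585 — 3 statements merged into one kernel-verified Lean document; each statement's English description precedes it below -/
import Mathlib

section
/- If (A,b,c) is a minimal (observable and controllable) realization of an NC polynomial, then the tuple A = (A_1, …, A_d) is jointly nilpotent: A^w = 0 for every word w of length greater than the degree of the polynomial. -/
open Matrix

namespace Matrix

variable {R m n : Type*} [CommSemiring R] [Fintype n]

theorem eq_zero_of_dotProduct_eq_zero_of_span_eq_top {s : Set (n → R)}
    (hs : Submodule.span R s = ⊤) {v : n → R} (h : ∀ x ∈ s, v ⬝ᵥ x = 0) : v = 0 :=
  dotProduct_eq_zero v fun x =>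
    LinearMap.congr_fun (LinearMap.ext_on hs (f := dotProductBilin R R v) (g := 0) h) x

theorem eq_zero_of_mulVec_eq_zero_of_span_eq_top {s : Set (n → R)}
    (hs : Submodule.span R s = ⊤) {P : Matrix m n R} (h : ∀ x ∈ s, P *ᵥ x = 0) : P = 0 :=
  funext fun i => eq_zero_of_dotProduct_eq_zero_of_span_eq_top hs fun x hx => congrFun (h x hx) i

end Matrix

/-- If `(A,b,c)` is an observable and controllable (minimal) realization and the
formal power series coefficients `b* A^w c` vanish for all words of length
greater than `m`, then the tuple `A` is jointly nilpotent:
`A^w = 0` for every word `w` with `|w| > m`. -/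
theorem minimal_realization_of_polynomial_jointly_nilpotent
    {d N : ℕ} (A : Fin d → Matrix (Fin N) (Fin N) ℂ) (b c : Fin N → ℂ) (m : ℕ)
    (hobs : Submodule.span ℂ
      {x : Fin N → ℂ | ∃ w : List (Fin d), x = ((w.map A).prod)ᴴ *ᵥ b} = ⊤)
    (hcon : Submodule.span ℂ
      {x : Fin N → ℂ | ∃ w : List (Fin d), x = (w.map A).prod *ᵥ c} = ⊤)
    (hcoef : ∀ w : List (Fin d), m < w.length →
      star b ⬝ᵥ ((w.map A).prod *ᵥ c) = 0) :
    ∀ w : List (Fin d), m < w.length → (w.map A).prod = 0 := by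
  intro w hw
  set M := (w.map A).prod
  -- `b* A^u M A^v c` is the coefficient of the long word `u w v`; controllability removes `A^v c`.
  have hrow : ∀ u : List (Fin d), star b ᵥ* ((u.map A).prod * M) = 0 := by
    refine fun u => eq_zero_of_dotProduct_eq_zero_of_span_eq_top hcon ?_
    rintro _ ⟨v, rfl⟩
    have hlong := hcoef (u ++ w ++ v) (by simp only [List.length_append]; omega)
    simpa only [List.map_append, List.prod_append, dotProduct_mulVec, vecMul_vecMul]
      using hlong
  -- Observability now removes `(A^u)* b`.
  have hMH : Mᴴ = 0 := by
    refine eq_zero_of_mulVec_eq_zero_of_span_eq_top hobs ?_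
    rintro _ ⟨u, rfl⟩
    rw [mulVec_mulVec, ← conjTranspose_mul, ← star_star b, ← star_vecMul, hrow, star_zero]
  exact conjTranspose_eq_zero.mp hMH
end

section
/- Cauchy–Schwarz inequality for the joint (outer) spectral radius: for d-tuples of matrices X and Y, the spectral radius of ∑_j X_j ⊗ conj(Y_j) is at most spr(X)·spr(Y), where spr(X)² is the spectral radius of ∑_j conj(X_j) ⊗ X_j. -/
/-!
Let `M = ∑ⱼ Xⱼ ⊗ conj Yⱼ`, `A = ∑ⱼ conj Xⱼ ⊗ Xⱼ`, `B = ∑ⱼ conj Yⱼ ⊗ Yⱼ`, and write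
`X_w = X_{w 0} ⋯ X_{w (k-1)}` for a word `w` of length `k`. Expanding `k`-th powers over words,
`(M^k)_{(a,c),(b,e)} = ∑_w (X_w)_{ab} conj (Y_w)_{ce}`, while `(A^k)_{(a,a),(b,b)} = ∑_w |(X_w)_{ab}|²`
and `(B^k)_{(c,c),(e,e)} = ∑_w |(Y_w)_{ce}|²`. Cauchy–Schwarz over words therefore bounds `‖M^k‖²`
by a constant times `‖A^k‖ ‖B^k‖` (in the ℓ∞-operator norm), and Gelfand's formula turns this into
`ρ(M)² ≤ ρ(A) ρ(B)`.
-/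

open Matrix Kronecker Finset Filter Topology
open scoped NNReal ENNReal ComplexConjugate

attribute [local instance] Matrix.linftyOpSeminormedAddCommGroup
  Matrix.linftyOpNormedAddCommGroup Matrix.linftyOpNormedRing Matrix.linftyOpNormedAlgebra

theorem Fintype.sum_pow_eq_sum_list_prod {ι R : Type*} [Fintype ι] [Semiring R] (f : ι → R) :
    ∀ k : ℕ, (∑ j, f j) ^ k = ∑ w : Fin k → ι, ((List.ofFn w).map f).prod
  | 0 => by simp
  | k + 1 => by
    rw [pow_succ', Fintype.sum_pow_eq_sum_list_prod f k, sum_mul_sum, ← Fintype.sum_prod_type']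
    exact Fintype.sum_equiv (Fin.consEquiv fun _ => ι) _ _ fun _ => by
      simp [Fin.consEquiv, List.ofFn_succ]

theorem RCLike.nnnorm_sum_conj_mul_self {ι 𝕜 : Type*} [RCLike 𝕜] (s : Finset ι) (z : ι → 𝕜) :
    ‖∑ i ∈ s, conj (z i) * z i‖₊ = ∑ i ∈ s, ‖z i‖₊ ^ 2 := by
  have h : ∑ i ∈ s, conj (z i) * z i = ((∑ i ∈ s, ‖z i‖ ^ 2 : ℝ) : 𝕜) := by
    push_cast [RCLike.conj_mul]
    rfl
  ext
  rw [h, coe_nnnorm, RCLike.norm_ofReal, abs_of_nonneg (by positivity)]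
  push_cast
  rfl

theorem RCLike.nnnorm_sum_mul_conj_sq_le {ι 𝕜 : Type*} [RCLike 𝕜] (s : Finset ι) (z w : ι → 𝕜) :
    ‖∑ i ∈ s, z i * conj (w i)‖₊ ^ 2 ≤
      ‖∑ i ∈ s, conj (z i) * z i‖₊ * ‖∑ i ∈ s, conj (w i) * w i‖₊ := by
  rw [nnnorm_sum_conj_mul_self, nnnorm_sum_conj_mul_self]
  calc ‖∑ i ∈ s, z i * conj (w i)‖₊ ^ 2 ≤ (∑ i ∈ s, ‖z i‖₊ * ‖w i‖₊) ^ 2 := by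
        gcongr
        refine (nnnorm_sum_le _ _).trans_eq ?_
        simp only [nnnorm_mul, RCLike.nnnorm_conj]
    _ ≤ _ := sum_mul_sq_le_sq_mul_sq _ _ _

theorem spectrum.spectralRadius_lt_top {𝕜 A : Type*} [NormedField 𝕜] [NormedRing A]
    [NormedAlgebra 𝕜 A] [CompleteSpace A] (a : A) : spectralRadius 𝕜 a < ∞ :=
  (spectralRadius_le_pow_nnnorm_pow_one_div 𝕜 a 0).trans_lt (by simp [ENNReal.mul_lt_top])

theorem ENNReal.tendsto_coe_rpow_one_div_nhds_one {K : ℝ≥0} (hK : K ≠ 0) :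
    Tendsto (fun k : ℕ => (K : ℝ≥0∞) ^ (1 / k : ℝ)) atTop (𝓝 1) := by
  have h := tendsto_const_nhds.nnrpow tendsto_one_div_atTop_nhds_zero_nat (Or.inl hK)
  rw [NNReal.rpow_zero] at h
  simpa [← ENNReal.coe_rpow_of_ne_zero hK] using ENNReal.tendsto_coe.2 h

theorem spectralRadius_sq_le_mul_of_nnnorm_pow_sq_le {A B C : Type*}
    [NormedRing A] [NormedAlgebra ℂ A] [CompleteSpace A]
    [NormedRing B] [NormedAlgebra ℂ B] [CompleteSpace B]
    [NormedRing C] [NormedAlgebra ℂ C] [CompleteSpace C]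
    (a : A) (b : B) (c : C) (K : ℝ≥0) (h : ∀ k : ℕ, ‖a ^ k‖₊ ^ 2 ≤ K * (‖b ^ k‖₊ * ‖c ^ k‖₊)) :
    spectralRadius ℂ a ^ 2 ≤ spectralRadius ℂ b * spectralRadius ℂ c := by
  wlog hK : K ≠ 0 generalizing K
  · exact this 1 (fun k => (h k).trans (by simp [not_not.1 hK])) one_ne_zero
  have hroot : ∀ k : ℕ, ((‖a ^ k‖₊ : ℝ≥0∞) ^ (1 / k : ℝ)) ^ 2 ≤
      (K : ℝ≥0∞) ^ (1 / k : ℝ) *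
        ((‖b ^ k‖₊ : ℝ≥0∞) ^ (1 / k : ℝ) * (‖c ^ k‖₊ : ℝ≥0∞) ^ (1 / k : ℝ)) := by
    intro k
    rw [← ENNReal.rpow_natCast, ← ENNReal.rpow_mul, mul_comm, ENNReal.rpow_mul,
      ← ENNReal.mul_rpow_of_nonneg _ _ (by positivity),
      ← ENNReal.mul_rpow_of_nonneg _ _ (by positivity), ENNReal.rpow_natCast]
    gcongr
    exact_mod_cast h k
  have hlim := ENNReal.Tendsto.mul (ENNReal.tendsto_coe_rpow_one_div_nhds_one hK)
    (.inl one_ne_zero)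
    (ENNReal.Tendsto.mul (spectrum.gelfand_formula b) (.inr (spectrum.spectralRadius_lt_top c).ne)
      (spectrum.gelfand_formula c) (.inr (spectrum.spectralRadius_lt_top b).ne))
    (.inr ENNReal.one_ne_top)
  rw [one_mul] at hlim
  exact le_of_tendsto_of_tendsto'
    (((ENNReal.continuous_pow 2).tendsto _).comp (spectrum.gelfand_formula a)) hlim hroot

namespace Matrix

variable {ι R n m : Type*} [Fintype n] [Fintype m]

theorem nnnorm_apply_le_linfty_opNNNorm {α : Type*} [SeminormedAddCommGroup α]
    (A : Matrix n m α) (i : n) (j : m) : ‖A i j‖₊ ≤ ‖A‖₊ := by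
  rw [linfty_opNNNorm_def]
  exact (single_le_sum (fun _ _ => zero_le) (mem_univ j)).trans
    (le_sup (f := fun i => ∑ j, ‖A i j‖₊) (mem_univ i))

theorem linfty_opNNNorm_le_card_mul {α : Type*} [SeminormedAddCommGroup α] (A : Matrix n m α)
    {c : ℝ≥0} (h : ∀ i j, ‖A i j‖₊ ≤ c) : ‖A‖₊ ≤ Fintype.card m * c := by
  rw [linfty_opNNNorm_def]
  refine Finset.sup_le fun i _ => ?_
  simpa using sum_le_sum fun j (_ : j ∈ univ) => h i j

variable [DecidableEq n] [DecidableEq m]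

theorem list_prod_map_map {S : Type*} [Semiring R] [Semiring S] (φ : R →+* S)
    (l : List ι) (f : ι → Matrix n n R) :
    (l.map fun j => (f j).map φ).prod = (l.map f).prod.map φ := by
  rw [← RingHom.mapMatrix_apply, map_list_prod, List.map_map]
  rfl

theorem list_prod_map_kronecker [CommSemiring R] (l : List ι) (f : ι → Matrix n n R)
    (g : ι → Matrix m m R) :
    (l.map fun j => f j ⊗ₖ g j).prod = (l.map f).prod ⊗ₖ (l.map g).prod := by
  induction l with
  | nil => simp
  | cons j l ih => simp [ih, mul_kronecker_mul]

theorem sum_kronecker_pow_apply [Fintype ι] [CommSemiring R] (f : ι → Matrix n n R)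
    (g : ι → Matrix m m R) (k : ℕ) (a b : n) (c e : m) :
    ((∑ j, f j ⊗ₖ g j) ^ k) (a, c) (b, e) =
      ∑ w : Fin k → ι, ((List.ofFn w).map f).prod a b * ((List.ofFn w).map g).prod c e := by
  rw [Fintype.sum_pow_eq_sum_list_prod, sum_apply]
  simp only [list_prod_map_kronecker, kroneckerMap_apply]

theorem sum_kronecker_conj_pow_apply_nnnorm_sq_le {𝕜 : Type*} [Fintype ι] [RCLike 𝕜]
    (X : ι → Matrix n n 𝕜) (Y : ι → Matrix m m 𝕜) (k : ℕ) (a b : n) (c e : m) :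
    ‖((∑ j, X j ⊗ₖ (Y j).map conj) ^ k) (a, c) (b, e)‖₊ ^ 2 ≤
      ‖((∑ j, (X j).map conj ⊗ₖ X j) ^ k) (a, a) (b, b)‖₊ *
        ‖((∑ j, (Y j).map conj ⊗ₖ Y j) ^ k) (c, c) (e, e)‖₊ := by
  simp only [sum_kronecker_pow_apply, list_prod_map_map, map_apply]
  exact RCLike.nnnorm_sum_mul_conj_sq_le _ _ _

theorem sum_kronecker_conj_pow_nnnorm_sq_le {𝕜 : Type*} [Fintype ι] [RCLike 𝕜]
    (X : ι → Matrix n n 𝕜) (Y : ι → Matrix m m 𝕜) (k : ℕ) :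
    ‖(∑ j, X j ⊗ₖ (Y j).map conj) ^ k‖₊ ^ 2 ≤
      Fintype.card (n × m) ^ 2 *
        (‖(∑ j, (X j).map conj ⊗ₖ X j) ^ k‖₊ * ‖(∑ j, (Y j).map conj ⊗ₖ Y j) ^ k‖₊) := by
  have hentry : ∀ i j, ‖((∑ j, X j ⊗ₖ (Y j).map conj) ^ k) i j‖₊ ≤
      NNReal.sqrt (‖(∑ j, (X j).map conj ⊗ₖ X j) ^ k‖₊ * ‖(∑ j, (Y j).map conj ⊗ₖ Y j) ^ k‖₊) :=
    fun i j => NNReal.le_sqrt_iff_sq_le.2 <|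
      (sum_kronecker_conj_pow_apply_nnnorm_sq_le X Y k i.1 j.1 i.2 j.2).trans <|
        mul_le_mul' (nnnorm_apply_le_linfty_opNNNorm _ _ _) (nnnorm_apply_le_linfty_opNNNorm _ _ _)
  calc _ ≤ (Fintype.card (n × m) * NNReal.sqrt (‖(∑ j, (X j).map conj ⊗ₖ X j) ^ k‖₊ *
          ‖(∑ j, (Y j).map conj ⊗ₖ Y j) ^ k‖₊)) ^ 2 :=
        pow_le_pow_left₀ zero_le (linfty_opNNNorm_le_card_mul _ hentry) 2
    _ = _ := by rw [mul_pow, NNReal.sq_sqrt]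

end Matrix

/-- Cauchy–Schwarz inequality for the joint (outer) spectral radius:
`ρ(∑_j X_j ⊗ conj(Y_j)) ≤ spr(X) · spr(Y)`, where
`spr(X) = sqrt(ρ(∑_j conj(X_j) ⊗ X_j))`. -/
theorem spectralRadius_kronecker_cauchy_schwarz
    {d n m : ℕ} (X : Fin d → Matrix (Fin n) (Fin n) ℂ)
    (Y : Fin d → Matrix (Fin m) (Fin m) ℂ) :
    spectralRadius ℂ (∑ j : Fin d, X j ⊗ₖ (Y j).map (starRingEnd ℂ)) ≤
      (spectralRadius ℂ
          (∑ j : Fin d, (X j).map (starRingEnd ℂ) ⊗ₖ X j)) ^ ((1 : ℝ) / 2) *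
        (spectralRadius ℂ
          (∑ j : Fin d, (Y j).map (starRingEnd ℂ) ⊗ₖ Y j)) ^ ((1 : ℝ) / 2) := by
  have hsq := spectralRadius_sq_le_mul_of_nnnorm_pow_sq_le _ _ _ _
    (Matrix.sum_kronecker_conj_pow_nnnorm_sq_le X Y)
  rw [← ENNReal.mul_rpow_of_nonneg _ _ (by norm_num)]
  calc _ = (spectralRadius ℂ (∑ j : Fin d, X j ⊗ₖ (Y j).map (starRingEnd ℂ)) ^ 2) ^ (2⁻¹ : ℝ) := by
        simpa using (ENNReal.pow_rpow_inv_natCast two_ne_zero _).symm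
    _ ≤ _ := by
        rw [one_div]
        gcongr
end

section
/- For an isometry V on a Hilbert space and z in the open unit disk, the Möbius transform (z·I − V)(I − conj(z)·V)^{-1} is an isometry. -/
/-!
In a C*-algebra, `star V * V = 1` forces `‖V‖ ≤ 1`, so `1 - conj z • V` is invertible by the
Neumann series. Expanding with `star V * V = 1`, both `star (z - V) * (z - V)` and
`star (1 - conj z • V) * (1 - conj z • V)` equal `1 + |z|² - conj z • V - z • star V`; writing
`a = 1 - conj z • V`, this gives `star W * W = star a⁻¹ * (star a * a) * a⁻¹ = 1`.
-/

open ContinuousLinearMap ComplexConjugate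

theorem CStarRing.norm_le_one_of_star_mul_self_eq_one {A : Type*} [NormedRing A] [StarRing A]
    [CStarRing A] {a : A} (h : star a * a = 1) : ‖a‖ ≤ 1 := by
  nontriviality A
  have h_sq : ‖a‖ * ‖a‖ = 1 := by rw [← CStarRing.norm_star_mul_self, h, CStarRing.norm_one]
  nlinarith [norm_nonneg a]

theorem isUnit_one_sub_smul_of_star_mul_self_eq_one {A : Type*} [NormedRing A] [StarRing A]
    [CStarRing A] [CompleteSpace A] [NormedAlgebra ℂ A] {a : A} (h : star a * a = 1) {c : ℂ}
    (hc : ‖c‖ < 1) : IsUnit (1 - c • a) := by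
  refine (Units.oneSub (c • a) ?_).isUnit
  calc ‖c • a‖ ≤ ‖c‖ * ‖a‖ := norm_smul_le c a
    _ ≤ ‖c‖ * 1 := by gcongr; exact CStarRing.norm_le_one_of_star_mul_self_eq_one h
    _ < 1 := by rwa [mul_one]

theorem star_mul_self_smul_one_sub_eq {A : Type*} [Ring A] [StarRing A] [Algebra ℂ A]
    [StarModule ℂ A] {v : A} (h : star v * v = 1) (z : ℂ) :
    star (z • (1 : A) - v) * (z • 1 - v) = star (1 - conj z • v) * (1 - conj z • v) := by
  simp only [star_sub, star_smul, star_one, sub_mul, mul_sub, smul_mul_assoc, mul_smul_comm,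
    one_mul, mul_one, h, Complex.star_def, smul_smul, Complex.conj_conj, smul_sub]
  module

theorem star_mul_self_mul_inverse_eq_one {A : Type*} [Semiring A] [StarMul A] {a b : A}
    (ha : IsUnit a) (h : star b * b = star a * a) :
    star (b * Ring.inverse a) * (b * Ring.inverse a) = 1 := by
  obtain ⟨u, rfl⟩ := ha
  calc star (b * Ring.inverse (u : A)) * (b * Ring.inverse (u : A))
      = star (↑u⁻¹ : A) * (star b * b) * ↑u⁻¹ := by
        rw [Ring.inverse_unit, star_mul]; noncomm_ring
    _ = star ((u : A) * ↑u⁻¹) * ((u : A) * ↑u⁻¹) := by rw [h, star_mul]; noncomm_ring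
    _ = 1 := by simp

/-- For an isometry `V` on a complex Hilbert space and `z` in the open unit
disk, `I − conj(z)V` is invertible and the Möbius transform
`W = (zI − V)(I − conj(z)V)⁻¹` is an isometry. -/
theorem moebius_of_isometry_is_isometry
    {H : Type*} [NormedAddCommGroup H] [InnerProductSpace ℂ H] [CompleteSpace H]
    (V : H →L[ℂ] H) (hV : adjoint V ∘L V = 1) (z : ℂ) (hz : ‖z‖ < 1) :
    IsUnit (1 - (starRingEnd ℂ z) • V) ∧
      adjoint ((z • (1 : H →L[ℂ] H) - V) *
          Ring.inverse (1 - (starRingEnd ℂ z) • V)) *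
        ((z • (1 : H →L[ℂ] H) - V) *
          Ring.inverse (1 - (starRingEnd ℂ z) • V)) = 1 := by
  have hV' : star V * V = 1 := hV
  have hunit : IsUnit (1 - conj z • V) :=
    isUnit_one_sub_smul_of_star_mul_self_eq_one hV' (by rwa [RCLike.norm_conj])
  exact ⟨hunit, star_mul_self_mul_inverse_eq_one hunit (star_mul_self_smul_one_sub_eq hV' z)⟩
end
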